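/- Let B be a balanced bipartite graph on 6 vertices (vertex classes of size 3 each). If B has exactly 5 edges, then either B contains a perfect matching or B is isomorphic to B_{023} or to B_{113}. -/
import Mathlib


open Finset

/-- The bipartite graph `B₀₂₃` on vertex classes `Fin 3` and `Fin 3`, with edge set
`{x₁y₀, x₁y₁, x₂y₀, x₂y₁, x₂y₂}` (degree sequences `0,2,3` and `2,2,1`). -/
def B023 : Finset (Fin 3 × Fin 3) :=
  Finset.univ.filter fun p => p.1 = 2 ∨ (p.1 = 1 ∧ p.2 ≠ 2)

/-- The bipartite graph `B₁₁₃` on vertex classes `Fin 3` and `Fin 3`, with edge set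
`{x₀y₀, x₀y₁, x₀y₂, x₁y₀, x₂y₀}` (each class has degree sequence `1,1,3`, and the two
degree-3 vertices `x₀, y₀` are joined by an edge). -/
def B113 : Finset (Fin 3 × Fin 3) :=
  Finset.univ.filter fun p => p.1 = 0 ∨ p.2 = 0

/-- Isomorphism of a bipartite graph with classes `α`, `β` and edge set `E` to a bipartite
graph on `Fin 3` and `Fin 3` with edge set `E'` (the isomorphism may also swap the two
vertex classes). -/
def BipIsoTo {α β : Type*} (E : Finset (α × β)) (E' : Finset (Fin 3 × Fin 3)) : Prop :=
  (∃ (g : α ≃ Fin 3) (h : β ≃ Fin 3), ∀ a b, (a, b) ∈ E ↔ (g a, h b) ∈ E') ∨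
  (∃ (g : β ≃ Fin 3) (h : α ≃ Fin 3), ∀ a b, (a, b) ∈ E ↔ (g b, h a) ∈ E')

set_option synthInstance.maxSize 1000 in
set_option maxRecDepth 10000 in
set_option maxHeartbeats 4000000 in
theorem key : ∀ E : Finset (Fin 3 × Fin 3), E.card = 5 →
    (∃ f : Fin 3 ≃ Fin 3, ∀ a, (a, f a) ∈ E) ∨ BipIsoTo E B023 ∨ BipIsoTo E B113 := by
  unfold BipIsoTo
  decide

theorem bipIso_trans {α β : Type*} [DecidableEq α] [DecidableEq β]
    (E : Finset (α × β)) (eα : α ≃ Fin 3) (eβ : β ≃ Fin 3)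
    (E' : Finset (Fin 3 × Fin 3))
    (hmem : ∀ a b, (a, b) ∈ E ↔ (eα a, eβ b) ∈ E')
    (G : Finset (Fin 3 × Fin 3)) (h : BipIsoTo E' G) : BipIsoTo E G := by
  rcases h with ⟨g, h, hgh⟩ | ⟨g, h, hgh⟩
  · exact Or.inl ⟨eα.trans g, eβ.trans h, fun a b => (hmem a b).trans (hgh _ _)⟩
  · exact Or.inr ⟨eβ.trans g, eα.trans h, fun a b => (hmem a b).trans (hgh _ _)⟩

/-- A balanced bipartite graph on `3 + 3` vertices with exactly 5 edges
either contains a perfect matching or is isomorphic to `B₀₂₃` or to `B₁₁₃`. -/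
theorem stmt_7 (α β : Type) [Fintype α] [Fintype β] [DecidableEq α] [DecidableEq β]
    (hα : Fintype.card α = 3) (hβ : Fintype.card β = 3)
    (E : Finset (α × β)) (hE : E.card = 5) :
    (∃ f : α ≃ β, ∀ a, (a, f a) ∈ E) ∨ BipIsoTo E B023 ∨ BipIsoTo E B113 := by
  have eα := Fintype.equivFinOfCardEq hα
  have eβ := Fintype.equivFinOfCardEq hβ
  set e : α × β ≃ Fin 3 × Fin 3 := eα.prodCongr eβ with he
  set E' : Finset (Fin 3 × Fin 3) := E.image e with hE'
  have hmem : ∀ a b, (a, b) ∈ E ↔ (eα a, eβ b) ∈ E' := by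
    intro a b
    rw [hE']
    constructor
    · intro h; simpa [he] using Finset.mem_image_of_mem e h
    · intro h
      obtain ⟨p, hp, hpe⟩ := Finset.mem_image.mp h
      have : p = (a, b) := e.injective (by simpa [he] using hpe)
      rwa [this] at hp
  have hcard : E'.card = 5 := by
    rw [hE', Finset.card_image_of_injective _ e.injective, hE]
  rcases key E' hcard with ⟨f, hf⟩ | h | h
  · left
    refine ⟨eα.trans (f.trans eβ.symm), fun a => ?_⟩
    have := hf (eα a)
    rw [hmem]
    simpa using this
  · exact Or.inr (Or.inl (bipIso_trans E eα eβ E' hmem B023 h))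
  · exact Or.inr (Or.inr (bipIso_trans E eα eβ E' hmem B113 h))
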